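/- arXiv:1109.6302 — 4 statements merged into one kernel-verified Lean document; each statement's English description precedes it below -/
import Mathlib

section
/- For the derivation ∂ = x^n ∂_y + p(y) ∂_z of ℂ[x,y,z] (n ≥ 1, p ∈ ℂ[y] nonconstant) with P an integral of p, the kernel of ∂ equals the ℂ-subalgebra generated by x and t = -x^n z + P(y), i.e. ker ∂ = ℂ[x, -x^n z + P(y)]. -/
/-!
Write `x, y, z` for `X 0, X 1, X 2`. Both `x` and `t` are killed by `∂`, so `ℂ[x, t] ⊆ ker ∂`.
Conversely, induct on the `z`-degree of `f ∈ ker ∂`. Since `∂` has coefficients free of `z`, it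
commutes with `∂_z`, so `∂_z f` lies in the kernel as well; from `x^n ∂_y f = -p ∂_z f` and
`x ∤ p` we get `∂_z f = x^n u` with `∂ u = 0` and `u` of lower `z`-degree, hence `u ∈ ℂ[x, t]`.
As `∂_z t = -x^n`, the element `x^n u` is `-∂_z h` for some `h ∈ ℂ[x, t]`, and then
`g = f + h ∈ ker ∂` has `∂_z g = 0`, hence `∂_y g = 0`, so `g ∈ ℂ[x]`.
-/

open MvPolynomial

namespace Derivation

theorem exists_mem_adjoin_pair_apply_eq_mul {K S : Type*} [Field K] [CharZero K] [CommRing S]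
    [Algebra K S] (d : Derivation K S S) {a t : S} (ha : d a = 0) {u : S}
    (hu : u ∈ Algebra.adjoin K {a, t}) : ∃ h ∈ Algebra.adjoin K {a, t}, d h = d t * u := by
  rw [← Subalgebra.mem_toSubmodule, Algebra.adjoin_eq_span] at hu
  induction hu using Submodule.span_induction with
  | mem m hm =>
    obtain ⟨i, k, rfl⟩ := (Submonoid.mem_closure_pair a t m).1 hm
    refine ⟨((k : K) + 1)⁻¹ • (a ^ i * t ^ (k + 1)), ?_, ?_⟩
    · exact Subalgebra.smul_mem _ (mul_mem (pow_mem (Algebra.subset_adjoin (by simp)) i)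
        (pow_mem (Algebra.subset_adjoin (by simp)) _)) _
    · have hk : ((k : K) + 1) ≠ 0 := Nat.cast_add_one_ne_zero k
      have hcast : ((k + 1 : ℕ) : S) = algebraMap K S ((k : K) + 1) := by simp
      rw [d.map_smul, d.leibniz, d.leibniz_pow, d.leibniz_pow, ha]
      simp only [Nat.add_sub_cancel, smul_eq_mul, nsmul_eq_mul, mul_zero, add_zero]
      rw [hcast, ← Algebra.smul_def, mul_smul_comm, smul_smul, inv_mul_cancel₀ hk, one_smul]
      ring
  | zero => exact ⟨0, zero_mem _, by simp⟩
  | add u₁ u₂ _ _ ih₁ ih₂ =>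
    obtain ⟨h₁, hA₁, e₁⟩ := ih₁
    obtain ⟨h₂, hA₂, e₂⟩ := ih₂
    exact ⟨h₁ + h₂, add_mem hA₁ hA₂, by rw [map_add, e₁, e₂, mul_add]⟩
  | smul c u _ ih =>
    obtain ⟨h, hA, e⟩ := ih
    exact ⟨c • h, Subalgebra.smul_mem _ hA c, by rw [d.map_smul, e, mul_smul_comm]⟩

end Derivation

namespace MvPolynomial

section

variable {σ R : Type*}

theorem mkDerivation_apply_eq_sum [CommSemiring R] [Fintype σ]
    (v : σ → MvPolynomial σ R) (f : MvPolynomial σ R) :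
    mkDerivation R v f = ∑ i, v i * pderiv i f := by
  classical
  have hsum (g : MvPolynomial σ R) : (∑ i, v i • pderiv i) g = ∑ i, v i * pderiv i g := by
    rw [← Derivation.coeFnAddMonoidHom_apply, map_sum, Finset.sum_apply]
    rfl
  have : mkDerivation R v = ∑ i, v i • pderiv i := derivation_ext fun j => by
    simp [hsum, pderiv_X, Pi.single_apply]
  rw [this, hsum]

theorem mkDerivation_pderiv_comm [CommRing R] {v : σ → MvPolynomial σ R} {i : σ}
    (hv : ∀ j, pderiv i (v j) = 0) (f : MvPolynomial σ R) :
    mkDerivation R v (pderiv i f) = pderiv i (mkDerivation R v f) := by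
  classical
  have : (⁅mkDerivation R v, pderiv i⁆ : Derivation R (MvPolynomial σ R) _) = 0 := by
    refine derivation_ext fun j => ?_
    simp only [Derivation.commutator_apply, pderiv_X, Pi.single_apply, hv, mkDerivation_X]
    split_ifs <;> simp
  simpa [Derivation.commutator_apply, sub_eq_zero] using DFunLike.congr_fun this f

theorem notMem_vars_of_pderiv_eq_zero [CommSemiring R] [CharZero R] [NoZeroDivisors R] {i : σ}
    {f : MvPolynomial σ R} (h : pderiv i f = 0) : i ∉ f.vars := by
  classical
  intro hi
  obtain ⟨m, hm, hmi⟩ := (mem_vars_iff_mem_support i).1 hi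
  have hle : Finsupp.single i 1 ≤ m :=
    Finsupp.single_le_iff.2 (Nat.one_le_iff_ne_zero.2 (Finsupp.mem_support_iff.1 hmi))
  have := coeff_pderiv (i := i) f (m - Finsupp.single i 1)
  rw [h, coeff_zero, tsub_add_cancel_of_le hle] at this
  exact mul_ne_zero (mem_support_iff.1 hm) (Nat.cast_add_one_ne_zero _) this.symm

theorem mem_supported_of_pderiv_eq_zero [CommSemiring R] [CharZero R] [NoZeroDivisors R]
    {s : Set σ} {f : MvPolynomial σ R} (h : ∀ i ∉ s, pderiv i f = 0) : f ∈ supported R s :=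
  mem_supported.2 fun i hi => by_contra fun his => notMem_vars_of_pderiv_eq_zero (h i his) hi

theorem degreeOf_pderiv_lt [CommSemiring R] {i : σ} {f : MvPolynomial σ R}
    (h : pderiv i f ≠ 0) : degreeOf i (pderiv i f) < degreeOf i f := by
  have key : ∀ m ∈ (pderiv i f).support, m i + 1 ≤ degreeOf i f := fun m hm => by
    rw [mem_support_iff, coeff_pderiv] at hm
    simpa using monomial_le_degreeOf i (mem_support_iff.2 (left_ne_zero_of_mul hm))
  obtain ⟨m, hm⟩ := support_nonempty.2 h
  have hpos := key m hm
  have hle : degreeOf i (pderiv i f) ≤ degreeOf i f - 1 :=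
    degreeOf_le_iff.2 fun m hm => by have := key m hm; omega
  omega

theorem not_X_dvd_of_notMem_vars [CommSemiring R] {i : σ} {f : MvPolynomial σ R} (hf : f ≠ 0)
    (hi : i ∉ f.vars) : ¬ X i ∣ f := by
  rintro ⟨g, rfl⟩
  have hg : g ≠ 0 := by rintro rfl; exact hf (mul_zero _)
  have := degreeOf_mul_X_self_pow_eq_add_of_ne_zero i 1 hg
  rw [pow_one, mul_comm] at this
  exact hi (mem_vars_iff_degreeOf_ne_zero.2 (by omega))

end

section Triangular

variable {R : Type*} [CommRing R] {n : ℕ} {p P : MvPolynomial (Fin 3) R}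

theorem mkDerivation_triangular_apply (f : MvPolynomial (Fin 3) R) :
    mkDerivation R ![0, X 0 ^ n, p] f = X 0 ^ n * pderiv 1 f + p * pderiv 2 f := by
  simp [mkDerivation_apply_eq_sum, Fin.sum_univ_three]

theorem mkDerivation_triangular_pderiv_two (hp2 : pderiv 2 p = 0) (f : MvPolynomial (Fin 3) R) :
    mkDerivation R ![0, X 0 ^ n, p] (pderiv 2 f) = pderiv 2 (mkDerivation R ![0, X 0 ^ n, p] f) :=
  mkDerivation_pderiv_comm (by simp [Fin.forall_fin_succ, hp2]) f

theorem pderiv_one_triangular_invariant (hP1 : pderiv 1 P = p) :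
    pderiv 1 (-(X 0 ^ n) * X 2 + P) = p := by
  simp [hP1]

theorem pderiv_two_triangular_invariant (hP2 : pderiv 2 P = 0) :
    pderiv 2 (-(X 0 ^ n) * X 2 + P) = -(X 0 ^ n) := by
  simp [hP2]

theorem mkDerivation_triangular_eq_zero_of_mem_adjoin (hP1 : pderiv 1 P = p)
    (hP2 : pderiv 2 P = 0) {f : MvPolynomial (Fin 3) R}
    (hf : f ∈ Algebra.adjoin R {X 0, -(X 0 ^ n) * X 2 + P}) :
    mkDerivation R ![0, X 0 ^ n, p] f = 0 := by
  induction hf using Algebra.adjoin_induction with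
  | mem g hg =>
    rcases hg with rfl | rfl
    · simp
    · rw [mkDerivation_triangular_apply, pderiv_one_triangular_invariant hP1,
        pderiv_two_triangular_invariant hP2]
      ring
  | algebraMap r => exact Derivation.map_algebraMap _ r
  | add f g _ _ hf hg => rw [map_add, hf, hg, add_zero]
  | mul f g _ _ hf hg => rw [Derivation.leibniz, hf, hg, smul_zero, smul_zero, add_zero]

variable [IsDomain R]

theorem X_pow_dvd_pderiv_two_of_mkDerivation_triangular_eq_zero (hxp : ¬ X 0 ∣ p)
    {f : MvPolynomial (Fin 3) R} (hf : mkDerivation R ![0, X 0 ^ n, p] f = 0) :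
    X 0 ^ n ∣ pderiv 2 f := by
  have hdvd : X 0 ^ n ∣ p * pderiv 2 f := ⟨-pderiv 1 f, by
    rw [mkDerivation_triangular_apply] at hf
    linear_combination hf⟩
  exact X_prime.pow_dvd_of_dvd_mul_left n hxp hdvd

theorem mem_adjoin_insert_X_zero_of_pderiv_eq_zero [CharZero R] {s : Set (MvPolynomial (Fin 3) R)}
    {f : MvPolynomial (Fin 3) R} (h1 : pderiv 1 f = 0) (h2 : pderiv 2 f = 0) :
    f ∈ Algebra.adjoin R (insert (X 0) s) := by
  have hsupp : supported R {0} ≤ Algebra.adjoin R (insert (X 0) s) := by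
    rw [supported_eq_adjoin_X, Set.image_singleton]
    exact Algebra.adjoin_mono (by simp)
  refine hsupp (mem_supported_of_pderiv_eq_zero fun i hi => ?_)
  fin_cases i <;> simp_all

end Triangular

variable {K : Type*} [Field K] [CharZero K] {n : ℕ} {p P : MvPolynomial (Fin 3) K}

theorem mem_adjoin_of_mkDerivation_triangular_eq_zero (hp2 : pderiv 2 p = 0) (hxp : ¬ X 0 ∣ p)
    (hP1 : pderiv 1 P = p) (hP2 : pderiv 2 P = 0) {f : MvPolynomial (Fin 3) K}
    (hf : mkDerivation K ![0, X 0 ^ n, p] f = 0) :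
    f ∈ Algebra.adjoin K {X 0, -(X 0 ^ n) * X 2 + P} := by
  set D := mkDerivation K ![0, X 0 ^ n, p]
  set A := Algebra.adjoin K {X 0, -(X 0 ^ n) * X 2 + P}
  have hxn : (X 0 : MvPolynomial (Fin 3) K) ^ n ≠ 0 := pow_ne_zero _ (X_ne_zero 0)
  induction hd : degreeOf 2 f using Nat.strong_induction_on generalizing f with
  | _ d ih =>
    obtain ⟨u, hu⟩ := X_pow_dvd_pderiv_two_of_mkDerivation_triangular_eq_zero hxp hf
    have hDu : D u = 0 := by
      have hcomm := mkDerivation_triangular_pderiv_two (n := n) hp2 f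
      rw [hf, map_zero, hu, Derivation.leibniz, smul_eq_mul] at hcomm
      simpa [D, hxn] using hcomm
    have huA : u ∈ A := by
      rcases eq_or_ne u 0 with rfl | hu0
      · exact zero_mem A
      refine ih _ ?_ hDu rfl
      have := degreeOf_pderiv_lt (hu ▸ mul_ne_zero hxn hu0 : pderiv 2 f ≠ 0)
      rwa [hu, mul_comm, degreeOf_mul_X_pow_of_ne _ (by decide), hd] at this
    obtain ⟨h, hA, hh⟩ :=
      (pderiv 2).exists_mem_adjoin_pair_apply_eq_mul (pderiv_X_of_ne (by decide)) huA
    rw [pderiv_two_triangular_invariant hP2] at hh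
    have hg2 : pderiv 2 (f + h) = 0 := by rw [map_add, hh, hu]; ring
    have hg1 : pderiv 1 (f + h) = 0 := by
      have hg := mkDerivation_triangular_apply (n := n) (p := p) (f + h)
      rw [map_add, hf, mkDerivation_triangular_eq_zero_of_mem_adjoin hP1 hP2 hA, hg2] at hg
      simpa [hxn] using hg.symm
    simpa [A] using sub_mem (mem_adjoin_insert_X_zero_of_pderiv_eq_zero hg1 hg2) hA

theorem mkDerivation_triangular_eq_zero_iff_mem_adjoin (hp2 : pderiv 2 p = 0) (hxp : ¬ X 0 ∣ p)
    (hP1 : pderiv 1 P = p) (hP2 : pderiv 2 P = 0) (f : MvPolynomial (Fin 3) K) :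
    mkDerivation K ![0, X 0 ^ n, p] f = 0 ↔ f ∈ Algebra.adjoin K {X 0, -(X 0 ^ n) * X 2 + P} :=
  ⟨mem_adjoin_of_mkDerivation_triangular_eq_zero hp2 hxp hP1 hP2,
    mkDerivation_triangular_eq_zero_of_mem_adjoin hP1 hP2⟩

end MvPolynomial

theorem stmt_2_general (n : ℕ) (p P : MvPolynomial (Fin 3) ℂ)
    (hp : p ∈ MvPolynomial.supported ℂ ({1} : Set (Fin 3)))
    (hpnc : p ∉ Set.range (MvPolynomial.C : ℂ → MvPolynomial (Fin 3) ℂ))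
    (hP : P ∈ MvPolynomial.supported ℂ ({1} : Set (Fin 3)))
    (hPp : MvPolynomial.pderiv 1 P = p)
    (D : Derivation ℂ (MvPolynomial (Fin 3) ℂ) (MvPolynomial (Fin 3) ℂ))
    (hD : D = MvPolynomial.mkDerivation ℂ ![0, X 0 ^ n, p]) :
    ∀ f : MvPolynomial (Fin 3) ℂ,
      D f = 0 ↔ f ∈ Algebra.adjoin ℂ ({X 0, -(X 0 ^ n) * X 2 + P} :
        Set (MvPolynomial (Fin 3) ℂ)) := by
  subst hD
  have notMem_vars {q : MvPolynomial (Fin 3) ℂ} (hq : q ∈ supported ℂ {1}) (i : Fin 3)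
      (hi : i ≠ 1) : i ∉ q.vars := fun hiq => hi (mem_supported.1 hq hiq)
  have hp0 : p ≠ 0 := by
    rintro rfl
    exact hpnc ⟨0, C_0⟩
  exact mkDerivation_triangular_eq_zero_iff_mem_adjoin
    (pderiv_eq_zero_of_notMem_vars (notMem_vars hp 2 (by decide)))
    (not_X_dvd_of_notMem_vars hp0 (notMem_vars hp 0 (by decide))) hPp
    (pderiv_eq_zero_of_notMem_vars (notMem_vars hP 2 (by decide)))

/-- For the derivation `∂ = x^n ∂_y + p(y) ∂_z` of `ℂ[x,y,z]` (`x = X 0`,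
`y = X 1`, `z = X 2`) with `n ≥ 1`, `p ∈ ℂ[y]` nonconstant and `P ∈ ℂ[y]` an
integral of `p`, the kernel of `∂` is the `ℂ`-subalgebra generated by `x` and
`t = -x^n z + P(y)`. -/
theorem stmt_2 (n : ℕ) (hn : 1 ≤ n) (p P : MvPolynomial (Fin 3) ℂ)
    (hp : p ∈ MvPolynomial.supported ℂ ({1} : Set (Fin 3)))
    (hpnc : p ∉ Set.range (MvPolynomial.C : ℂ → MvPolynomial (Fin 3) ℂ))
    (hP : P ∈ MvPolynomial.supported ℂ ({1} : Set (Fin 3)))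
    (hPp : MvPolynomial.pderiv 1 P = p)
    (D : Derivation ℂ (MvPolynomial (Fin 3) ℂ) (MvPolynomial (Fin 3) ℂ))
    (hD : D = MvPolynomial.mkDerivation ℂ ![0, X 0 ^ n, p]) :
    ∀ f : MvPolynomial (Fin 3) ℂ,
      D f = 0 ↔ f ∈ Algebra.adjoin ℂ ({X 0, -(X 0 ^ n) * X 2 + P} :
        Set (MvPolynomial (Fin 3) ℂ)) :=
  stmt_2_general n p P hp hpnc hP hPp D hD
end

section
/- Let B be a commutative ℂ-algebra and ∂ a locally nilpotent derivation of B admitting a slice s (∂s = 1). Then B is isomorphic as a ker(∂)-algebra to the polynomial ring ker(∂)[s]; more precisely the map ker(∂)[T] → B sending T ↦ s is an isomorphism of ker(∂)-algebras. -/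
/-- The kernel of a derivation, as a subalgebra. -/
def derivationKer {B : Type*} [CommRing B] [Algebra ℂ B]
    (D : Derivation ℂ B B) : Subalgebra ℂ B where
  carrier := {b : B | D b = 0}
  mul_mem' := fun {a b} ha hb => by
    have ha' : D a = 0 := ha
    have hb' : D b = 0 := hb
    show D (a * b) = 0
    rw [D.leibniz, ha', hb', smul_zero, smul_zero, add_zero]
  add_mem' := fun {a b} ha hb => by
    have ha' : D a = 0 := ha
    have hb' : D b = 0 := hb
    show D (a + b) = 0
    rw [map_add, ha', hb', add_zero]
  algebraMap_mem' := fun c => D.map_algebraMap c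

/-!
Since `∂ s = 1`, the derivation `∂` acts on `ker(∂)[s]` as `d/dT`. A polynomial relation
for `s` of minimal degree is therefore constant (its derivative is a relation of smaller
degree, and in characteristic zero only constants have derivative zero), hence trivial.
Conversely, if `∂^(m+1) b = 0` then by induction `∂ b = p(s)`; for an antiderivative `q`
of `p` the element `b - q(s)` lies in `ker ∂`, so `b` is a polynomial in `s`.
-/

open Polynomial

theorem Polynomial.exists_derivative_eq {k A : Type*} [Field k] [CharZero k] [CommRing A]
    [Algebra k A] (p : A[X]) : ∃ q : A[X], derivative q = p := by
  refine ⟨p.sum fun n a => monomial (n + 1) (((n + 1 : ℕ) : k)⁻¹ • a), ?_⟩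
  rw [Polynomial.sum, map_sum]
  conv_rhs => rw [← p.sum_monomial_eq, Polynomial.sum]
  refine Finset.sum_congr rfl fun n _ => ?_
  rw [derivative_monomial, Nat.add_sub_cancel, mul_comm, ← nsmul_eq_mul,
    ← Nat.cast_smul_eq_nsmul k, smul_smul, mul_inv_cancel₀ (Nat.cast_ne_zero.2 n.succ_ne_zero),
    one_smul]

namespace Derivation

section Slice

variable {A B : Type*} [CommRing A] [CommRing B] [Algebra A B] (D : Derivation A B B) {s : B}

theorem map_aeval_of_apply_eq_one (hs : D s = 1) (p : A[X]) :
    D (aeval s p) = aeval s (derivative p) := by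
  rw [D.map_aeval, hs, smul_eq_mul, mul_one]

theorem aeval_injective_of_apply_eq_one [IsAddTorsionFree A]
    (hA : Function.Injective (algebraMap A B)) (hs : D s = 1) :
    Function.Injective (aeval s : A[X] →ₐ[A] B) := by
  rw [injective_iff_map_eq_zero]
  intro p hp
  induction hn : p.natDegree using Nat.strong_induction_on generalizing p with
  | _ n ih =>
  have hdeg : p.natDegree = 0 := by
    by_contra hne
    refine derivative_ne_zero.2 hne (ih _ (hn ▸ natDegree_derivative_lt hne) _ ?_ rfl)
    rw [← D.map_aeval_of_apply_eq_one hs, hp, map_zero]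
  rw [eq_C_of_natDegree_eq_zero hdeg, aeval_C] at hp
  rw [eq_C_of_natDegree_eq_zero hdeg, (map_eq_zero_iff _ hA).1 hp, C_0]

theorem mem_range_aeval_of_iterate_eq_zero (k : Type*) [Field k] [CharZero k] [Algebra k A]
    (hker : ∀ b, D b = 0 → b ∈ Set.range (algebraMap A B)) (hs : D s = 1) {m : ℕ} :
    ∀ {b : B}, D^[m] b = 0 → b ∈ Set.range (aeval s : A[X] →ₐ[A] B) := by
  induction m with
  | zero => rintro b rfl; exact ⟨0, map_zero _⟩
  | succ m ih =>
    intro b hb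
    obtain ⟨p, hp⟩ := ih (b := D b) hb
    obtain ⟨q, rfl⟩ := exists_derivative_eq (k := k) p
    obtain ⟨c, hc⟩ := hker (b - aeval s q) <| by
      rw [map_sub, D.map_aeval_of_apply_eq_one hs, hp, sub_self]
    exact ⟨C c + q, by rw [map_add, aeval_C, hc, sub_add_cancel]⟩

theorem aeval_bijective_of_apply_eq_one (k : Type*) [Field k] [CharZero k] [Algebra k A]
    (hA : Function.Injective (algebraMap A B))
    (hker : ∀ b, D b = 0 → b ∈ Set.range (algebraMap A B))
    (hnil : ∀ b : B, ∃ m : ℕ, D^[m] b = 0) (hs : D s = 1) :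
    Function.Bijective (aeval s : A[X] →ₐ[A] B) := by
  have : IsAddTorsionFree A := .of_isTorsionFree k A
  refine ⟨D.aeval_injective_of_apply_eq_one hA hs, fun b => ?_⟩
  obtain ⟨m, hm⟩ := hnil b
  exact D.mem_range_aeval_of_iterate_eq_zero k hker hs hm

end Slice

def overKer {B : Type*} [CommRing B] [Algebra ℂ B] (D : Derivation ℂ B B) :
    Derivation (derivationKer D) B B :=
  Derivation.mk'
    { toFun := D
      map_add' := D.map_add
      map_smul' := fun c b => by
        rw [Subalgebra.smul_def, smul_eq_mul, D.leibniz, c.2, smul_zero, add_zero]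
        rfl }
    D.leibniz

end Derivation

/-- Rentschler's slice theorem: if a locally nilpotent derivation `∂` of a
commutative `ℂ`-algebra `B` admits a slice `s` (`∂ s = 1`), then the evaluation
map `ker(∂)[T] → B`, `T ↦ s`, is an isomorphism of `ker(∂)`-algebras. -/
theorem stmt_4 {B : Type*} [CommRing B] [Algebra ℂ B]
    (D : Derivation ℂ B B)
    (hLN : ∀ b : B, ∃ m : ℕ, (⇑D)^[m] b = 0)
    (s : B) (hs : D s = 1) :
    Function.Bijective
      (Polynomial.aeval (R := ↥(derivationKer D)) s :
        Polynomial ↥(derivationKer D) →ₐ[↥(derivationKer D)] B) := by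
  exact D.overKer.aeval_bijective_of_apply_eq_one ℂ Subtype.val_injective
    (fun b hb => ⟨⟨b, hb⟩, rfl⟩) hLN hs
end

section
/- Let A be a discrete valuation ring over ℂ with uniformizer x and residue field ℂ, n ≥ 1, and p₁, p₂ ∈ A[y] with p̄₁ = 0 in ℂ[y] and (x^n, p₁, p₂) the unit ideal. Then p₂ = c + x·q for some nonzero constant c ∈ ℂ ⊂ A and q ∈ A[y]; moreover, after the change of variables z₁ ↦ z₁ + z₂, the derivation x^n∂_y + p₁∂_{z₁} + p₂∂_{z₂} becomes twin-triangular with both residue polynomials nonzero modulo x. -/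
open MvPolynomial Polynomial

/-! Setting `z₁ = z₂ = 0` and reducing modulo `x` kills `x ^ n` and `p₁`, so the unit ideal
`(x ^ n, p₁, p₂)` maps onto `(p̄₂)`: thus `p̄₂` is a unit of `ℂ[y]`, a nonzero constant `c`, and
`p₂ - c` lies in `ker (A[y] → ℂ[y]) = (x)`. Both residue polynomials after the change of
variables equal `p̄₂` because `p̄₁ = 0`. -/

theorem Ideal.isUnit_map_of_span_insert_eq_top {R S : Type*} [CommSemiring R] [CommSemiring S]
    (f : R →+* S) {c : R} {s : Set R} (hs : ∀ a ∈ s, f a = 0)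
    (h : Ideal.span (insert c s) = ⊤) : IsUnit (f c) := by
  rw [← Ideal.span_singleton_eq_top, eq_top_iff, ← Ideal.map_top f, ← h, Ideal.map_span,
    Ideal.span_le, Set.image_insert_eq, Set.insert_subset_iff]
  refine ⟨Ideal.subset_span rfl, ?_⟩
  rintro _ ⟨a, ha, rfl⟩
  simp only [hs a ha, SetLike.mem_coe, Ideal.zero_mem]

theorem Polynomial.exists_eq_add_C_mul_of_map_eq {A K : Type*} [CommRing A] [Ring K]
    (π : A →+* K) {x : A} (hker : RingHom.ker π = Ideal.span {x}) {p q : A[X]}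
    (h : p.map π = q.map π) : ∃ r : A[X], p = q + Polynomial.C x * r := by
  have hmem : p - q ∈ RingHom.ker (Polynomial.mapRingHom π) := by
    simp [RingHom.mem_ker, h]
  rw [Polynomial.ker_mapRingHom, hker, Ideal.map_span, Set.image_singleton,
    Ideal.mem_span_singleton] at hmem
  obtain ⟨r, hr⟩ := hmem
  exact ⟨r, by rw [← hr, add_sub_cancel]⟩

theorem stmt_7_general (A : Type*) [CommRing A]
    [Algebra ℂ A] (x : A)
    (π : A →+* ℂ)
    (hπker : RingHom.ker π = Ideal.span {x})
    (hπalg : ∀ c : ℂ, π (algebraMap ℂ A c) = c)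
    (n : ℕ) (hn : 1 ≤ n) (p₁ p₂ : Polynomial A)
    (hp₁bar : p₁.map π = 0)
    (hunit : Ideal.span
        ({MvPolynomial.C (x ^ n),
          Polynomial.aeval (MvPolynomial.X 0) p₁,
          Polynomial.aeval (MvPolynomial.X 0) p₂} :
          Set (MvPolynomial (Fin 3) A)) = ⊤) :
    (∃ c : ℂ, c ≠ 0 ∧ ∃ q : Polynomial A,
        p₂ = Polynomial.C (algebraMap ℂ A c) + Polynomial.C x * q) ∧
      (p₁ + p₂).map π ≠ 0 ∧ p₂.map π ≠ 0 := by
  have hπx : π x = 0 := by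
    rw [← RingHom.mem_ker, hπker]
    exact Ideal.mem_span_singleton_self x
  let ψ : MvPolynomial (Fin 3) A →ₐ[A] A[X] := MvPolynomial.aeval (Pi.single 0 Polynomial.X)
  let φ := (Polynomial.mapRingHom π).comp ψ.toRingHom
  have hφ (p : A[X]) : φ (Polynomial.aeval (MvPolynomial.X 0) p) = p.map π := by
    simp [φ, ψ, ← Polynomial.aeval_algHom_apply]
  have hresidue : IsUnit (p₂.map π) := by
    rw [Set.pair_comm, Set.insert_comm] at hunit
    rw [← hφ]
    refine Ideal.isUnit_map_of_span_insert_eq_top φ ?_ hunit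
    rintro a (rfl | rfl)
    · simp [φ, hπx, zero_pow (Nat.one_le_iff_ne_zero.mp hn)]
    · rw [hφ, hp₁bar]
  obtain ⟨c, hc, hceq⟩ := Polynomial.isUnit_iff.mp hresidue
  obtain ⟨q, hq⟩ := Polynomial.exists_eq_add_C_mul_of_map_eq π hπker
    (p := p₂) (q := Polynomial.C (algebraMap ℂ A c)) (by rw [Polynomial.map_C, hπalg, hceq])
  refine ⟨⟨c, hc.ne_zero, q, hq⟩, ?_, hresidue.ne_zero⟩
  rw [Polynomial.map_add, hp₁bar, zero_add]
  exact hresidue.ne_zero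

/-- Let `A` be a DVR over `ℂ` with uniformizer `x` and residue field `ℂ`
(realized by a surjective `π : A → ℂ` with kernel `(x)` splitting the
`ℂ`-algebra structure), `n ≥ 1`, and `p₁, p₂ ∈ A[y]` with `p̄₁ = 0` and
`(x^n, p₁, p₂)` the unit ideal of `A[y,z₁,z₂]`. Then `p₂ = c + x·q` with
`c ∈ ℂ*`, and after the change of variables `z₁ ↦ z₁ + z₂` (replacing
`(p₁,p₂)` by `(p₁+p₂, p₂)`) both residue polynomials are nonzero mod `x`. -/
theorem stmt_7 (A : Type*) [CommRing A] [IsDomain A] [IsDiscreteValuationRing A]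
    [Algebra ℂ A] (x : A) (hx : Irreducible x)
    (π : A →+* ℂ) (hπsurj : Function.Surjective π)
    (hπker : RingHom.ker π = Ideal.span {x})
    (hπalg : ∀ c : ℂ, π (algebraMap ℂ A c) = c)
    (n : ℕ) (hn : 1 ≤ n) (p₁ p₂ : Polynomial A)
    (hp₁bar : p₁.map π = 0)
    (hunit : Ideal.span
        ({MvPolynomial.C (x ^ n),
          Polynomial.aeval (MvPolynomial.X 0) p₁,
          Polynomial.aeval (MvPolynomial.X 0) p₂} :
          Set (MvPolynomial (Fin 3) A)) = ⊤) :
    (∃ c : ℂ, c ≠ 0 ∧ ∃ q : Polynomial A,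
        p₂ = Polynomial.C (algebraMap ℂ A c) + Polynomial.C x * q) ∧
      (p₁ + p₂).map π ≠ 0 ∧ p₂.map π ≠ 0 :=
  stmt_7_general A x π hπker hπalg n hn p₁ p₂ hp₁bar hunit
end

section
/- Let P ∈ ℂ[y] be nonconstant, and let α ∈ ℂ[t] be a polynomial whose zero set contains all critical values of P (values P(a) with P'(a) = 0) and with α ≠ 0. Then the ring extension ℂ[t]_α → (ℂ[t]_α)[y]/(P(y) - t) is finite étale. -/
/-!
Over `R = ℂ[t]_α` the polynomial `Q(y) = P(y) - t` has unit leading coefficient, so `R[y]/(Q)` is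
finite, and it is standard étale as soon as `Q' = P'` is a unit in `R[y]/(Q)`. Every root of `P'`
is a root of `α ∘ P`, hence `P' ∣ (α ∘ P)ⁿ` over `ℂ`; in `R[y]/(Q)` we have `α(P(y)) = α(t)`,
which is a unit, so `P'(y)` is a unit too.
-/

open Polynomial

theorem Polynomial.dvd_pow_card_roots_of_forall_eval_eq_zero {k : Type*} [Field k]
    [IsAlgClosed k] {f g : k[X]} (hf : f ≠ 0) (h : ∀ a, f.eval a = 0 → g.eval a = 0) :
    f ∣ g ^ Multiset.card f.roots := by
  conv_lhs => rw [(IsAlgClosed.splits f).eq_prod_roots]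
  rw [C_mul_dvd (leadingCoeff_ne_zero.mpr hf), ← Multiset.prod_replicate, ← Multiset.map_const']
  exact Multiset.prod_dvd_prod_of_dvd _ _ fun a ha ↦
    dvd_iff_isRoot.mpr (h a (isRoot_of_mem_roots ha))

theorem AdjoinRoot.etale_of_monic_of_isUnit_derivative {R : Type*} [CommRing R] {f : R[X]}
    (hf : f.Monic) (hf' : IsUnit (mk f (derivative f))) : Algebra.Etale R (AdjoinRoot f) := by
  obtain ⟨p, hp⟩ := hf'.exists_right_inv
  obtain ⟨p, rfl⟩ := mk_surjective p
  obtain ⟨q, hq⟩ := mk_eq_mk.mp (show mk f (derivative f * p) = mk f 1 by rwa [map_mul, map_one])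
  -- the standard étale algebra `(R[X]/f)[1/g]` with `g = 1`
  let P : StandardEtalePair R := ⟨f, hf, 1, p, -q, 0, by linear_combination hq⟩
  exact .of_equiv (P.equivAwayAdjoinRoot.trans
    ((IsLocalization.atUnit (AdjoinRoot f) _ (mk f 1) (by simp)).symm.restrictScalars R))

theorem AdjoinRoot.finite_and_etale_of_isUnit_leadingCoeff {R : Type*} [CommRing R] {f : R[X]}
    (hlc : IsUnit f.leadingCoeff) (hf' : IsUnit (mk f (derivative f))) :
    Module.Finite R (AdjoinRoot f) ∧ Algebra.Etale R (AdjoinRoot f) := by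
  obtain ⟨u, hu⟩ := hlc
  set g := C (↑u⁻¹ : R) * f
  have hg : g.Monic := monic_C_mul_of_mul_leadingCoeff_eq_one (by rw [← hu, Units.inv_mul])
  have hspan : Ideal.span {g} = Ideal.span {f} :=
    Ideal.span_singleton_mul_left_unit (isUnit_C.mpr u⁻¹.isUnit) f
  change IsUnit (Ideal.Quotient.mk (Ideal.span {f}) _) at hf'
  rw [← hspan] at hf'
  have hg' : IsUnit (mk g (derivative g)) := by
    rw [derivative_C_mul, map_mul, mk_C]
    exact (u⁻¹.isUnit.map _).mul hf'
  let e : AdjoinRoot g ≃ₐ[R] AdjoinRoot f := Ideal.quotientEquivAlgOfEq R hspan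
  have := hg.finite_adjoinRoot
  have := etale_of_monic_of_isUnit_derivative hg hg'
  exact ⟨.equiv e.toLinearEquiv, .of_equiv e⟩

theorem Polynomial.isUnit_aeval_derivative_of_critical_values {k A : Type*} [Field k]
    [IsAlgClosed k] [CommRing A] [Algebra k A] [Algebra k[X] A] [IsScalarTower k k[X] A]
    {P α : k[X]} (hP : derivative P ≠ 0)
    (hcrit : ∀ a, (derivative P).eval a = 0 → α.eval (P.eval a) = 0)
    (hα : IsUnit (algebraMap k[X] A α)) {y : A} (hy : aeval y P = algebraMap k[X] A X) :
    IsUnit (aeval y (derivative P)) := by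
  obtain ⟨q, hq⟩ := dvd_pow_card_roots_of_forall_eval_eq_zero (g := α.comp P) hP
    (by simpa only [eval_comp] using hcrit)
  have hαP : aeval y (α.comp P) = algebraMap k[X] A α := by
    rw [aeval_comp, hy, aeval_algebraMap_apply, aeval_X_left_apply]
  refine isUnit_of_mul_isUnit_left (y := aeval y q) ?_
  rw [← map_mul, ← hq, map_pow, hαP]
  exact hα.pow _

/-- Let `P ∈ ℂ[y]` be nonconstant and `α ∈ ℂ[t]` a nonzero polynomial whose zero
set contains all critical values of `P`. Then, with `R = ℂ[t]_α` the
localization away from `α`, the extension `R → R[y]/(P(y) - t)` is finite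
étale. -/
theorem stmt_9 (P α : Polynomial ℂ) (hP : 0 < P.natDegree) (hα : α ≠ 0)
    (hcrit : ∀ a : ℂ, (Polynomial.derivative P).eval a = 0 →
      α.eval (P.eval a) = 0) :
    Module.Finite (Localization.Away α)
        (Polynomial (Localization.Away α) ⧸
          Ideal.span ({P.map (algebraMap ℂ (Localization.Away α)) -
            Polynomial.C (algebraMap (Polynomial ℂ) (Localization.Away α)
              Polynomial.X)} : Set (Polynomial (Localization.Away α)))) ∧
      Algebra.Etale (Localization.Away α)
        (Polynomial (Localization.Away α) ⧸
          Ideal.span ({P.map (algebraMap ℂ (Localization.Away α)) -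
            Polynomial.C (algebraMap (Polynomial ℂ) (Localization.Away α)
              Polynomial.X)} : Set (Polynomial (Localization.Away α)))) := by
  set R := Localization.Away α
  have : IsDomain R := IsLocalization.isDomain_of_le_nonZeroDivisors _
    (powers_le_nonZeroDivisors_of_noZeroDivisors hα)
  set t := algebraMap ℂ[X] R X
  set Q := P.map (algebraMap ℂ R) - C t
  have hdeg : (C t).degree < (P.map (algebraMap ℂ R)).degree := by
    rw [degree_map]
    exact degree_C_le.trans_lt (natDegree_pos_iff_degree_pos.mp hP)
  have hlc : IsUnit Q.leadingCoeff := by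
    rw [leadingCoeff_sub_of_degree_lt hdeg, leadingCoeff_map]
    exact (isUnit_iff_ne_zero.mpr (leadingCoeff_ne_zero.mpr (ne_zero_of_natDegree_gt hP))).map _
  have hroot : aeval (AdjoinRoot.root Q) P = algebraMap ℂ[X] (AdjoinRoot Q) X := by
    rw [← aeval_map_algebraMap R, AdjoinRoot.aeval_eq, IsScalarTower.algebraMap_apply ℂ[X] R,
      AdjoinRoot.algebraMap_eq, ← AdjoinRoot.mk_C, ← sub_eq_zero, ← map_sub, AdjoinRoot.mk_self]
  have hderiv : IsUnit (AdjoinRoot.mk Q (derivative Q)) := by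
    rw [derivative_sub, derivative_C, sub_zero, derivative_map, ← AdjoinRoot.aeval_eq,
      aeval_map_algebraMap]
    refine isUnit_aeval_derivative_of_critical_values ?_ hcrit ?_ hroot
    · exact fun h ↦ hP.ne' (derivative_eq_zero.mp h)
    · exact (IsLocalization.Away.algebraMap_isUnit α).map (algebraMap R (AdjoinRoot Q))
  exact AdjoinRoot.finite_and_etale_of_isUnit_leadingCoeff hlc hderiv
end
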